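/- Let G be the group presented by ⟨a, s, t | a² = 1, [a, t⁻¹at] = 1, [s,t] = 1, s⁻¹as = a·(t⁻¹at)⟩. Then for every integer p ≥ 0, the following identity holds in G: s⁻ᵖ a sᵖ = ∏_{r=0}^{p} (t⁻ʳ a tʳ)^{ε(p,r)}, where ε(p,r) = 1 if the binomial coefficient C(p,r) is odd and ε(p,r) = 0 if C(p,r) is even, and the product is taken in order of increasing r (the factors commute). In other words, a^{sᵖ} equals the product of the conjugates a^{tʳ} over those r ∈ {0, …, p} for which the r-th entry of row p of Pascal's triangle mod 2 equals 1. -/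

import Mathlib

/-!
Write `aᵣ = t⁻ʳ a tʳ`. Since `s` commutes with `t`, conjugation by `s` sends `aᵣ` to `aᵣ aᵣ₊₁`,
and `aᵣ` commutes with `aᵣ₊₁`. Applying this `p` times to `a₀` and merging, at each step, the two
neighbouring powers of every `aᵣ` produces `a₀^C(p,0) a₁^C(p,1) ⋯ a_p^C(p,p)` by Pascal's rule;
only neighbours ever have to be commuted. Finally `aᵣ² = 1` reduces the exponents mod 2.
-/

/-- The three generators `a`, `s`, `t`. -/
inductive Gen : Type
  | a | s | t

/-- The relators of the presentation
`⟨a, s, t | a² = 1, [a, t⁻¹at] = 1, [s,t] = 1, s⁻¹as = a·(t⁻¹at)⟩`,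
where `[x,y] = x⁻¹y⁻¹xy`. -/
def rels : Set (FreeGroup Gen) :=
  { (FreeGroup.of Gen.a) ^ 2,
    (FreeGroup.of Gen.a)⁻¹ *
        ((FreeGroup.of Gen.t)⁻¹ * FreeGroup.of Gen.a * FreeGroup.of Gen.t)⁻¹ *
        FreeGroup.of Gen.a *
        ((FreeGroup.of Gen.t)⁻¹ * FreeGroup.of Gen.a * FreeGroup.of Gen.t),
    (FreeGroup.of Gen.s)⁻¹ * (FreeGroup.of Gen.t)⁻¹ * FreeGroup.of Gen.s * FreeGroup.of Gen.t,
    ((FreeGroup.of Gen.s)⁻¹ * FreeGroup.of Gen.a * FreeGroup.of Gen.s)⁻¹ *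
        (FreeGroup.of Gen.a *
          ((FreeGroup.of Gen.t)⁻¹ * FreeGroup.of Gen.a * FreeGroup.of Gen.t)) }

/-- The group `G` of the paper. -/
abbrev G := PresentedGroup rels

def a : G := PresentedGroup.of Gen.a
def s : G := PresentedGroup.of Gen.s
def t : G := PresentedGroup.of Gen.t

section Pascal

variable {M : Type*} [Monoid M]

theorem prod_range_pow_mul_pow_succ (x : ℕ → M) (e : ℕ → ℕ) (n : ℕ) :
    ((List.range (n + 1)).map fun r => x r ^ e r * x (r + 1) ^ e r).prod =
      x 0 ^ e 0 * ((List.range n).map fun r => x (r + 1) ^ (e r + e (r + 1))).prod *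
        x (n + 1) ^ e n := by
  induction n with
  | zero => simp
  | succ n ih =>
    rw [List.range_succ, List.map_append, List.prod_append, ih, List.range_succ,
      List.map_append, List.prod_append]
    simp only [List.map_cons, List.map_nil, List.prod_cons, List.prod_nil, mul_one, pow_add,
      mul_assoc]

theorem iterate_eq_prod_pow_choose (σ : M →* M) (x : ℕ → M)
    (hx : ∀ r, Commute (x r) (x (r + 1))) (hσ : ∀ r, σ (x r) = x r * x (r + 1)) (p : ℕ) :
    σ^[p] (x 0) = ((List.range (p + 1)).map fun r => x r ^ p.choose r).prod := by
  induction p with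
  | zero => simp
  | succ p ih =>
    have hσx (r : ℕ) : σ (x r ^ p.choose r) = x r ^ p.choose r * x (r + 1) ^ p.choose r := by
      rw [map_pow, hσ, (hx r).mul_pow]
    rw [Function.iterate_succ_apply', ih, map_list_prod, List.map_map, Function.comp_def]
    simp only [hσx]
    rw [prod_range_pow_mul_pow_succ, List.range_succ, List.map_append, List.prod_append,
      List.range_succ_eq_map, List.map_cons, List.prod_cons, List.map_map]
    simp [Function.comp_def, Nat.choose_succ_succ']

end Pascal

section ConjugatePowers

variable {H : Type*} [Group H] {a s t : H}

theorem commute_of_inv_mul_inv_mul_mul_eq_one {x y : H} (h : x⁻¹ * y⁻¹ * x * y = 1) :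
    Commute x y :=
  calc x * y = y * x * (x⁻¹ * y⁻¹ * x * y) := by group
    _ = y * x := by rw [h, mul_one]

theorem conj_pow_eq_prod_conj_pow_choose (hat : Commute a (t⁻¹ * a * t)) (hst : Commute s t)
    (hsa : s⁻¹ * a * s = a * (t⁻¹ * a * t)) (p : ℕ) :
    (s ^ p)⁻¹ * a * s ^ p =
      ((List.range (p + 1)).map fun r => ((t ^ r)⁻¹ * a * t ^ r) ^ p.choose r).prod := by
  set x : ℕ → H := fun r => (t ^ r)⁻¹ * a * t ^ r
  have hx (r : ℕ) : Commute (x r) (x (r + 1)) := by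
    convert hat.map (MulAut.conj (t ^ r)⁻¹ : H →* H) using 1 <;>
      simp only [x, MonoidHom.coe_coe, MulAut.conj_apply, inv_inv, pow_succ]
    group
  have hσ (r : ℕ) : MulAut.conj s⁻¹ (x r) = x r * x (r + 1) := by
    have hstr : s * t ^ r = t ^ r * s := (hst.pow_right r).eq
    calc s⁻¹ * x r * s⁻¹⁻¹ = (s⁻¹ * (t ^ r)⁻¹) * a * (t ^ r * s) := by simp only [x]; group
      _ = (t ^ r)⁻¹ * (s⁻¹ * a * s) * t ^ r := by rw [← mul_inv_rev, ← hstr, mul_inv_rev]; group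
      _ = x r * x (r + 1) := by simp only [hsa, x, pow_succ]; group
  have hconj (n : ℕ) : (s ^ n)⁻¹ * a * s ^ n = (MulAut.conj s⁻¹ : H →* H)^[n] (x 0) := by
    induction n with
    | zero => simp [x]
    | succ n ih =>
      rw [Function.iterate_succ_apply', ← ih]
      simp only [MonoidHom.coe_coe, MulAut.conj_apply, inv_inv, pow_succ]
      group
  rw [hconj]
  exact iterate_eq_prod_pow_choose _ x hx hσ p

theorem conj_pow_eq_prod_conj_pow_choose_mod_two (ha : a ^ 2 = 1)
    (hat : Commute a (t⁻¹ * a * t)) (hst : Commute s t)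
    (hsa : s⁻¹ * a * s = a * (t⁻¹ * a * t)) (p : ℕ) :
    (s ^ p)⁻¹ * a * s ^ p =
      ((List.range (p + 1)).map fun r => ((t ^ r)⁻¹ * a * t ^ r) ^ (p.choose r % 2)).prod := by
  rw [conj_pow_eq_prod_conj_pow_choose hat hst hsa]
  refine congrArg List.prod (List.map_congr_left fun r _ => pow_eq_pow_mod _ ?_)
  calc ((t ^ r)⁻¹ * a * t ^ r) ^ 2 = (t ^ r)⁻¹ * a ^ 2 * t ^ r := by
        simpa using conj_pow (a := (t ^ r)⁻¹) (b := a) (i := 2)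
    _ = 1 := by rw [ha, mul_one, inv_mul_cancel]

end ConjugatePowers

theorem a_sq : a ^ 2 = 1 :=
  (map_pow _ _ _).symm.trans (PresentedGroup.one_of_mem (Set.mem_insert _ _))

theorem commute_a_conj_t : Commute a (t⁻¹ * a * t) :=
  commute_of_inv_mul_inv_mul_mul_eq_one
    (PresentedGroup.one_of_mem (Set.mem_insert_of_mem _ (Set.mem_insert _ _)))

theorem commute_s_t : Commute s t :=
  commute_of_inv_mul_inv_mul_mul_eq_one (PresentedGroup.one_of_mem
    (Set.mem_insert_of_mem _ (Set.mem_insert_of_mem _ (Set.mem_insert _ _))))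

theorem s_inv_mul_a_mul_s : s⁻¹ * a * s = a * (t⁻¹ * a * t) :=
  inv_mul_eq_one.mp (PresentedGroup.one_of_mem
    (Set.mem_insert_of_mem _ (Set.mem_insert_of_mem _ (Set.mem_insert_of_mem _ rfl))))

/-- In `G`, for every `p ≥ 0` the conjugate `a^{sᵖ} = s⁻ᵖ a sᵖ` equals the ordered
product, over `r = 0, …, p`, of `(t⁻ʳ a tʳ)^{ε(p,r)}`, where `ε(p,r) = C(p,r) mod 2`
(i.e. `ε(p,r) = 1` exactly when the binomial coefficient `C(p,r)` is odd). -/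
theorem conj_a_s_pow_eq_pascal_product (p : ℕ) :
    (s ^ p)⁻¹ * a * s ^ p =
      (((List.range (p + 1)).map
        (fun r => ((t ^ r)⁻¹ * a * t ^ r) ^ (Nat.choose p r % 2))).prod) :=
  conj_pow_eq_prod_conj_pow_choose_mod_two a_sq commute_a_conj_t commute_s_t s_inv_mul_a_mul_s p
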